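/- arXiv:1505.03833 — 6 statements merged into one kernel-verified Lean document; each statement's English description precedes it below -/
import Mathlib

section
/- Let N ≠ 0 and b be real constants and let x(ξ) = −1/(Nξ + b) on an interval where Nξ + b > 0. If N satisfies N² + 2kN − (m + (n−2)k²) = 0 for constants k, m, n, then the pair (x, y) with y(ξ) = N·x(ξ) solves the ODE system y' = [m + (n−2)k²]x² − 2kxy and x' = xy on that interval. -/
theorem hasDerivAt_neg_one_div_affine {N b ξ : ℝ} (h : N * ξ + b ≠ 0) :
    HasDerivAt (fun t => -1 / (N * t + b)) (N * (-1 / (N * ξ + b)) ^ 2) ξ := by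
  have hlin : HasDerivAt (fun t => N * t + b) N ξ := by
    simpa using ((hasDerivAt_id ξ).const_mul N).add_const b
  refine ((hasDerivAt_const ξ (-1 : ℝ)).div hlin h).congr_deriv ?_
  field_simp
  ring

-- `x = -1/(Nξ + b)` solves the Riccati equation `x' = N x²`; with `y = N x` both equations of
-- the system reduce to it, the first one after substituting `m + (n-2)k² = N² + 2kN`.
theorem stmt_2_general (k m n N b : ℝ)
    (hN : N ^ 2 + 2 * k * N - (m + (n - 2) * k ^ 2) = 0)
    (x y : ℝ → ℝ)
    (hx : x = fun ξ => -1 / (N * ξ + b))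
    (hy : y = fun ξ => N * x ξ) :
    ∀ ξ : ℝ, N * ξ + b > 0 →
      HasDerivAt y ((m + (n - 2) * k ^ 2) * x ξ ^ 2 - 2 * k * x ξ * y ξ) ξ ∧
      HasDerivAt x (x ξ * y ξ) ξ := by
  intro ξ hξ
  subst hy hx
  have hriccati := hasDerivAt_neg_one_div_affine hξ.ne'
  set u := -1 / (N * ξ + b)
  constructor
  · refine (hriccati.const_mul N).congr_deriv ?_
    linear_combination u ^ 2 * hN
  · refine hriccati.congr_deriv ?_
    ring

/-- x(ξ) = −1/(Nξ + b), y = N·x solve the planar system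
y' = [m + (n−2)k²]x² − 2kxy, x' = xy wherever Nξ + b > 0, provided N is a root
of N² + 2kN − (m + (n−2)k²) = 0. -/
theorem stmt_2 (k m n N b : ℝ) (hk : 0 < k) (hm : 1 ≤ m) (hn : 3 ≤ n)
    (hN0 : N ≠ 0)
    (hN : N ^ 2 + 2 * k * N - (m + (n - 2) * k ^ 2) = 0)
    (x y : ℝ → ℝ)
    (hx : x = fun ξ => -1 / (N * ξ + b))
    (hy : y = fun ξ => N * x ξ) :
    ∀ ξ : ℝ, N * ξ + b > 0 →
      HasDerivAt y ((m + (n - 2) * k ^ 2) * x ξ ^ 2 - 2 * k * x ξ * y ξ) ξ ∧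
      HasDerivAt x (x ξ * y ξ) ξ :=
  stmt_2_general k m n N b hN x y hx hy
end

section
/- Let k > 0, m ≥ 1, n ≥ 3, N = −k ± √(m + (n−1)k²) (either sign, N ≠ 0), c₁, c₂ > 0, b ∈ ℝ. Define on an interval where Nξ + b > 0: φ(ξ) = c₂(Nξ + b)^(−k/N), f(ξ) = c₁(Nξ + b)^(−1/N), h(ξ) = −((m − (n−2)k + N)/N)·ln(Nξ + b). Then these functions satisfy the ODE system: (n−2)φ''/φ + h'' − m f''/f − 2m(φ'/φ)(f'/f) + 2(φ'/φ)h' = 0; φ''/φ − (n−1)(φ'/φ)² + m(φ'/φ)(f'/f) − (φ'/φ)h' = 0; −f''/f + (n−2)(φ'/φ)(f'/f) − (m−1)(f'/f)² + (f'/f)h' = 0. -/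
/-!
Along the affine variable `x = Nξ + b` every function involved is a power of `x` or a multiple
of `log x`, so each quotient `φ'/φ`, `φ''/φ`, `f'/f`, `f''/f`, `h'`, `h''` is a constant
multiple of `1/x` or `1/x²`. Clearing `x` turns the three equations into polynomial identities
in `k, m, n, N`: the second and third hold identically, and the first is exactly the quadratic
relation `N² + 2kN = m + (n - 2)k²` satisfied by both roots `N = -k ± √(m + (n - 1)k²)`.
-/

open Filter Topology

section Affine

variable {c p N b ξ : ℝ}

lemma eventually_affine_pos (hx : 0 < N * ξ + b) : ∀ᶠ y in 𝓝 ξ, 0 < N * y + b :=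
  (isOpen_lt continuous_const (by fun_prop)).mem_nhds hx

lemma hasDerivAt_affine (N b ξ : ℝ) : HasDerivAt (fun y => N * y + b) N ξ := by
  simpa using ((hasDerivAt_id ξ).const_mul N).add_const b

lemma deriv_const_mul_affine_rpow (hx : 0 < N * ξ + b) :
    deriv (fun y => c * (N * y + b) ^ p) ξ = c * p * N * (N * ξ + b) ^ (p - 1) := by
  have h := ((hasDerivAt_affine N b ξ).rpow_const (p := p) (Or.inl hx.ne')).const_mul c
  rw [h.deriv]
  ring

lemma deriv_deriv_const_mul_affine_rpow (hx : 0 < N * ξ + b) :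
    deriv (deriv fun y => c * (N * y + b) ^ p) ξ
      = c * p * (p - 1) * N ^ 2 * (N * ξ + b) ^ (p - 2) := by
  have hderiv : deriv (fun y => c * (N * y + b) ^ p)
      =ᶠ[𝓝 ξ] fun y => c * p * N * (N * y + b) ^ (p - 1) := by
    filter_upwards [eventually_affine_pos hx] with y hy
    exact deriv_const_mul_affine_rpow hy
  rw [hderiv.deriv_eq, deriv_const_mul_affine_rpow hx, sub_sub, one_add_one_eq_two]
  ring

lemma deriv_div_const_mul_affine_rpow (hc : c ≠ 0) (hx : 0 < N * ξ + b) :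
    deriv (fun y => c * (N * y + b) ^ p) ξ / (c * (N * ξ + b) ^ p) = p * N / (N * ξ + b) := by
  rw [deriv_const_mul_affine_rpow hx, Real.rpow_sub_one hx.ne']
  have := (Real.rpow_pos_of_pos hx p).ne'
  field_simp

lemma deriv_deriv_div_const_mul_affine_rpow (hc : c ≠ 0) (hx : 0 < N * ξ + b) :
    deriv (deriv fun y => c * (N * y + b) ^ p) ξ / (c * (N * ξ + b) ^ p)
      = p * (p - 1) * N ^ 2 / (N * ξ + b) ^ 2 := by
  rw [deriv_deriv_const_mul_affine_rpow hx, Real.rpow_sub hx, Real.rpow_two]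
  have := (Real.rpow_pos_of_pos hx p).ne'
  field_simp

lemma deriv_const_mul_log_affine (hx : 0 < N * ξ + b) :
    deriv (fun y => c * Real.log (N * y + b)) ξ = c * N * (N * ξ + b) ^ (-1 : ℝ) := by
  have h := ((hasDerivAt_affine N b ξ).log hx.ne').const_mul c
  rw [h.deriv, Real.rpow_neg_one]
  ring

lemma deriv_deriv_const_mul_log_affine (hx : 0 < N * ξ + b) :
    deriv (deriv fun y => c * Real.log (N * y + b)) ξ = -(c * N ^ 2) / (N * ξ + b) ^ 2 := by
  have hderiv : deriv (fun y => c * Real.log (N * y + b))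
      =ᶠ[𝓝 ξ] fun y => c * N * (N * y + b) ^ (-1 : ℝ) := by
    filter_upwards [eventually_affine_pos hx] with y hy
    exact deriv_const_mul_log_affine hy
  rw [hderiv.deriv_eq, deriv_const_mul_affine_rpow hx, Real.rpow_sub_one hx.ne',
    Real.rpow_neg_one]
  field_simp

end Affine

lemma sq_add_two_mul_eq_of_eq_neg_add_sqrt {k s N : ℝ} (hs : 0 ≤ s)
    (hN : N = -k + √s ∨ N = -k - √s) : N ^ 2 + 2 * k * N = s - k ^ 2 := by
  have hsq := Real.sq_sqrt hs
  rcases hN with rfl | rfl <;> linear_combination hsq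

theorem stmt_3_general (k m n N c₁ c₂ b : ℝ) (hm : 1 ≤ m) (hn : 3 ≤ n)
    (hN : N = -k + Real.sqrt (m + (n - 1) * k ^ 2) ∨
          N = -k - Real.sqrt (m + (n - 1) * k ^ 2))
    (hN0 : N ≠ 0) (hc₁ : 0 < c₁) (hc₂ : 0 < c₂)
    (φ f h : ℝ → ℝ)
    (hφ : φ = fun ξ => c₂ * (N * ξ + b) ^ (-(k / N)))
    (hf : f = fun ξ => c₁ * (N * ξ + b) ^ (-(1 / N)))
    (hh : h = fun ξ => -((m - (n - 2) * k + N) / N) * Real.log (N * ξ + b)) :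
    ∀ ξ : ℝ, N * ξ + b > 0 →
      ((n - 2) * deriv (deriv φ) ξ / φ ξ + deriv (deriv h) ξ
          - m * deriv (deriv f) ξ / f ξ
          - 2 * m * (deriv φ ξ / φ ξ) * (deriv f ξ / f ξ)
          + 2 * (deriv φ ξ / φ ξ) * deriv h ξ = 0) ∧
      (deriv (deriv φ) ξ / φ ξ - (n - 1) * (deriv φ ξ / φ ξ) ^ 2
          + m * (deriv φ ξ / φ ξ) * (deriv f ξ / f ξ)
          - (deriv φ ξ / φ ξ) * deriv h ξ = 0) ∧
      (-(deriv (deriv f) ξ / f ξ) + (n - 2) * (deriv φ ξ / φ ξ) * (deriv f ξ / f ξ)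
          - (m - 1) * (deriv f ξ / f ξ) ^ 2 + (deriv f ξ / f ξ) * deriv h ξ = 0) := by
  have hquad : N ^ 2 + 2 * k * N = m + (n - 2) * k ^ 2 := by
    rw [sq_add_two_mul_eq_of_eq_neg_add_sqrt (by nlinarith [sq_nonneg k]) hN]
    ring
  intro ξ hx
  subst hφ hf hh
  simp only [mul_div_assoc, deriv_div_const_mul_affine_rpow hc₂.ne' hx,
    deriv_deriv_div_const_mul_affine_rpow hc₂.ne' hx,
    deriv_div_const_mul_affine_rpow hc₁.ne' hx, deriv_deriv_div_const_mul_affine_rpow hc₁.ne' hx,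
    deriv_const_mul_log_affine hx, deriv_deriv_const_mul_log_affine hx,
    Real.rpow_neg_one]
  refine ⟨?_, ?_, ?_⟩ <;> field_simp
  · linear_combination hquad
  · ring
  · ring

/-- The explicit functions φ(ξ) = c₂(Nξ+b)^(−k/N), f(ξ) = c₁(Nξ+b)^(−1/N),
h(ξ) = −((m−(n−2)k+N)/N)·ln(Nξ+b), with N = −k ± √(m+(n−1)k²) ≠ 0, satisfy the
three soliton ODEs on the set where Nξ + b > 0. -/
theorem stmt_3 (k m n N c₁ c₂ b : ℝ) (hk : 0 < k) (hm : 1 ≤ m) (hn : 3 ≤ n)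
    (hN : N = -k + Real.sqrt (m + (n - 1) * k ^ 2) ∨
          N = -k - Real.sqrt (m + (n - 1) * k ^ 2))
    (hN0 : N ≠ 0) (hc₁ : 0 < c₁) (hc₂ : 0 < c₂)
    (φ f h : ℝ → ℝ)
    (hφ : φ = fun ξ => c₂ * (N * ξ + b) ^ (-(k / N)))
    (hf : f = fun ξ => c₁ * (N * ξ + b) ^ (-(1 / N)))
    (hh : h = fun ξ => -((m - (n - 2) * k + N) / N) * Real.log (N * ξ + b)) :
    ∀ ξ : ℝ, N * ξ + b > 0 →
      ((n - 2) * deriv (deriv φ) ξ / φ ξ + deriv (deriv h) ξ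
          - m * deriv (deriv f) ξ / f ξ
          - 2 * m * (deriv φ ξ / φ ξ) * (deriv f ξ / f ξ)
          + 2 * (deriv φ ξ / φ ξ) * deriv h ξ = 0) ∧
      (deriv (deriv φ) ξ / φ ξ - (n - 1) * (deriv φ ξ / φ ξ) ^ 2
          + m * (deriv φ ξ / φ ξ) * (deriv f ξ / f ξ)
          - (deriv φ ξ / φ ξ) * deriv h ξ = 0) ∧
      (-(deriv (deriv f) ξ / f ξ) + (n - 2) * (deriv φ ξ / φ ξ) * (deriv f ξ / f ξ)
          - (m - 1) * (deriv f ξ / f ξ) ^ 2 + (deriv f ξ / f ξ) * deriv h ξ = 0) :=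
  stmt_3_general k m n N c₁ c₂ b hm hn hN hN0 hc₁ hc₂ φ f h hφ hf hh
end

section
/- Suppose smooth functions φ, f, h : I → ℝ with φ, f > 0 satisfy the three ODEs: (n−2)φ''/φ + h'' − m f''/f − 2m(φ'/φ)(f'/f) + 2(φ'/φ)h' = 0; φ''/φ − (n−1)(φ'/φ)² + m(φ'/φ)(f'/f) − (φ'/φ)h' = 0; −f''/f + (n−2)(φ'/φ)(f'/f) − (m−1)(f'/f)² + (f'/f)h' = 0; and suppose φ'/φ = k(f'/f) for a constant k. Then setting x = f'/f and y = h' + ((n−2)k − m)(f'/f), the pair (x, y) satisfies y' = [m + (n−2)k²]x² − 2kxy and x' = xy. -/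
/-!
Writing `x = f'/f`, the logarithmic derivative gives `x' = f''/f - x²`. Once `φ'/φ = k x` is
substituted, the third equation says exactly `x' = x y`, and the combination
`(1) - (n-2)·(2) - (n-2)k·(3)` eliminates `φ''/φ` and `f''/f`, leaving the equation for `y'`.
-/

theorem ContDiffAt.differentiableAt_deriv {𝕜 F : Type*} [NontriviallyNormedField 𝕜]
    [NormedAddCommGroup F] [NormedSpace 𝕜 F] {f : 𝕜 → F} {x : 𝕜} {n : WithTop ℕ∞}
    (hf : ContDiffAt 𝕜 n f x) (hn : 2 ≤ n) : DifferentiableAt 𝕜 (deriv f) x := by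
  have hfderiv : DifferentiableAt 𝕜 (fderiv 𝕜 f) x :=
    (hf.fderiv_right (m := 1) (by rwa [one_add_one_eq_two])).differentiableAt one_ne_zero
  simpa only [fderiv_apply_one_eq_deriv] using hfderiv.clm_apply (differentiableAt_const 1)

theorem hasDerivAt_logDeriv {𝕜 : Type*} [NontriviallyNormedField 𝕜] {f : 𝕜 → 𝕜} {x : 𝕜}
    (hf : DifferentiableAt 𝕜 f x) (hf' : DifferentiableAt 𝕜 (deriv f) x) (hx : f x ≠ 0) :
    HasDerivAt (logDeriv f) (deriv (deriv f) x / f x - logDeriv f x ^ 2) x := by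
  refine (hf'.hasDerivAt.div hf.hasDerivAt hx).congr_deriv ?_
  rw [logDeriv_apply]
  field_simp

theorem stmt_4_general (n m : ℕ) (k : ℝ)
    (I : Set ℝ)
    (φ f h : ℝ → ℝ)
    (hfreg : ∀ ξ ∈ I, ContDiffAt ℝ 2 f ξ)
    (hhreg : ∀ ξ ∈ I, ContDiffAt ℝ 2 h ξ)
    (hfpos : ∀ ξ ∈ I, 0 < f ξ)
    (hode1 : ∀ ξ ∈ I,
      ((n : ℝ) - 2) * deriv (deriv φ) ξ / φ ξ + deriv (deriv h) ξ
        - (m : ℝ) * deriv (deriv f) ξ / f ξ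
        - 2 * (m : ℝ) * (deriv φ ξ / φ ξ) * (deriv f ξ / f ξ)
        + 2 * (deriv φ ξ / φ ξ) * deriv h ξ = 0)
    (hode2 : ∀ ξ ∈ I,
      deriv (deriv φ) ξ / φ ξ - ((n : ℝ) - 1) * (deriv φ ξ / φ ξ) ^ 2
        + (m : ℝ) * (deriv φ ξ / φ ξ) * (deriv f ξ / f ξ)
        - (deriv φ ξ / φ ξ) * deriv h ξ = 0)
    (hode3 : ∀ ξ ∈ I,
      -(deriv (deriv f) ξ / f ξ)
        + ((n : ℝ) - 2) * (deriv φ ξ / φ ξ) * (deriv f ξ / f ξ)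
        - ((m : ℝ) - 1) * (deriv f ξ / f ξ) ^ 2
        + (deriv f ξ / f ξ) * deriv h ξ = 0)
    (hprop : ∀ ξ ∈ I, deriv φ ξ / φ ξ = k * (deriv f ξ / f ξ))
    (x y : ℝ → ℝ)
    (hx : x = fun ξ => deriv f ξ / f ξ)
    (hy : y = fun ξ => deriv h ξ + (((n : ℝ) - 2) * k - (m : ℝ)) * (deriv f ξ / f ξ)) :
    ∀ ξ ∈ I,
      deriv y ξ = ((m : ℝ) + ((n : ℝ) - 2) * k ^ 2) * x ξ ^ 2 - 2 * k * x ξ * y ξ ∧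
      deriv x ξ = x ξ * y ξ := by
  subst hx hy
  intro ξ hξ
  have hx_deriv : HasDerivAt (fun ξ => deriv f ξ / f ξ)
      (deriv (deriv f) ξ / f ξ - (deriv f ξ / f ξ) ^ 2) ξ :=
    hasDerivAt_logDeriv ((hfreg ξ hξ).differentiableAt two_ne_zero)
      ((hfreg ξ hξ).differentiableAt_deriv le_rfl) (hfpos ξ hξ).ne'
  have hy_deriv : HasDerivAt (fun ξ => deriv h ξ + (((n : ℝ) - 2) * k - m) * (deriv f ξ / f ξ))
      (deriv (deriv h) ξ + (((n : ℝ) - 2) * k - m) *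
        (deriv (deriv f) ξ / f ξ - (deriv f ξ / f ξ) ^ 2)) ξ :=
    ((hhreg ξ hξ).differentiableAt_deriv le_rfl).hasDerivAt.add (hx_deriv.const_mul _)
  have h1 := hode1 ξ hξ
  have h2 := hode2 ξ hξ
  have h3 := hode3 ξ hξ
  rw [hprop ξ hξ] at h1 h2 h3
  refine ⟨?_, ?_⟩
  · rw [hy_deriv.deriv]
    linear_combination h1 - ((n : ℝ) - 2) * h2 - ((n : ℝ) - 2) * k * h3
  · rw [hx_deriv.deriv]
    linear_combination -h3

/-- If φ, f, h satisfy the three soliton ODEs and φ'/φ = k·(f'/f), then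
x = f'/f and y = h' + ((n−2)k − m)(f'/f) satisfy the planar system
y' = [m + (n−2)k²]x² − 2kxy, x' = xy. -/
theorem stmt_4 (n m : ℕ) (hn : 3 ≤ n) (hm : 1 ≤ m) (k : ℝ) (hk : 0 < k)
    (a b : ℝ) (I : Set ℝ) (hI : I = Set.Ioo a b)
    (φ f h : ℝ → ℝ)
    (hφreg : ∀ ξ ∈ I, ContDiffAt ℝ 2 φ ξ)
    (hfreg : ∀ ξ ∈ I, ContDiffAt ℝ 2 f ξ)
    (hhreg : ∀ ξ ∈ I, ContDiffAt ℝ 2 h ξ)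
    (hφpos : ∀ ξ ∈ I, 0 < φ ξ) (hfpos : ∀ ξ ∈ I, 0 < f ξ)
    (hf' : ∀ ξ ∈ I, deriv f ξ ≠ 0)
    (hode1 : ∀ ξ ∈ I,
      ((n : ℝ) - 2) * deriv (deriv φ) ξ / φ ξ + deriv (deriv h) ξ
        - (m : ℝ) * deriv (deriv f) ξ / f ξ
        - 2 * (m : ℝ) * (deriv φ ξ / φ ξ) * (deriv f ξ / f ξ)
        + 2 * (deriv φ ξ / φ ξ) * deriv h ξ = 0)
    (hode2 : ∀ ξ ∈ I,
      deriv (deriv φ) ξ / φ ξ - ((n : ℝ) - 1) * (deriv φ ξ / φ ξ) ^ 2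
        + (m : ℝ) * (deriv φ ξ / φ ξ) * (deriv f ξ / f ξ)
        - (deriv φ ξ / φ ξ) * deriv h ξ = 0)
    (hode3 : ∀ ξ ∈ I,
      -(deriv (deriv f) ξ / f ξ)
        + ((n : ℝ) - 2) * (deriv φ ξ / φ ξ) * (deriv f ξ / f ξ)
        - ((m : ℝ) - 1) * (deriv f ξ / f ξ) ^ 2
        + (deriv f ξ / f ξ) * deriv h ξ = 0)
    (hprop : ∀ ξ ∈ I, deriv φ ξ / φ ξ = k * (deriv f ξ / f ξ))
    (x y : ℝ → ℝ)
    (hx : x = fun ξ => deriv f ξ / f ξ)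
    (hy : y = fun ξ => deriv h ξ + (((n : ℝ) - 2) * k - (m : ℝ)) * (deriv f ξ / f ξ)) :
    ∀ ξ ∈ I,
      deriv y ξ = ((m : ℝ) + ((n : ℝ) - 2) * k ^ 2) * x ξ ^ 2 - 2 * k * x ξ * y ξ ∧
      deriv x ξ = x ξ * y ξ :=
  stmt_4_general n m k I φ f h hfreg hhreg hfpos hode1 hode2 hode3 hprop x y hx hy
end

section
/- Conversely, if differentiable functions x, y : I → ℝ satisfy y' = [m + (n−2)k²]x² − 2kxy and x' = xy, and φ, f, h are defined (up to constants) by f'/f = x, φ'/φ = kx, h' = y − ((n−2)k − m)x, then φ, f, h satisfy the three ODEs: (n−2)φ''/φ + h'' − m f''/f − 2m(φ'/φ)(f'/f) + 2(φ'/φ)h' = 0; φ''/φ − (n−1)(φ'/φ)² + m(φ'/φ)(f'/f) − (φ'/φ)h' = 0; −f''/f + (n−2)(φ'/φ)(f'/f) − (m−1)(f'/f)² + (f'/f)h' = 0. -/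
/-- Conversely, if (x, y) solves the planar system and φ, f, h have
f'/f = x, φ'/φ = kx, h' = y − ((n−2)k − m)x, then φ, f, h satisfy the three
soliton ODEs. -/
theorem stmt_5 (n m : ℕ) (hn : 3 ≤ n) (hm : 1 ≤ m) (k : ℝ) (hk : 0 < k)
    (a b : ℝ) (I : Set ℝ) (hI : I = Set.Ioo a b)
    (x y φ f h : ℝ → ℝ)
    (hxd : ∀ ξ ∈ I, DifferentiableAt ℝ x ξ)
    (hyd : ∀ ξ ∈ I, DifferentiableAt ℝ y ξ)
    (hsys1 : ∀ ξ ∈ I,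
      deriv y ξ = ((m : ℝ) + ((n : ℝ) - 2) * k ^ 2) * x ξ ^ 2 - 2 * k * x ξ * y ξ)
    (hsys2 : ∀ ξ ∈ I, deriv x ξ = x ξ * y ξ)
    (hφreg : ∀ ξ ∈ I, ContDiffAt ℝ 2 φ ξ)
    (hfreg : ∀ ξ ∈ I, ContDiffAt ℝ 2 f ξ)
    (hhreg : ∀ ξ ∈ I, ContDiffAt ℝ 2 h ξ)
    (hφpos : ∀ ξ ∈ I, 0 < φ ξ) (hfpos : ∀ ξ ∈ I, 0 < f ξ)
    (hf : ∀ ξ ∈ I, deriv f ξ / f ξ = x ξ)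
    (hφ : ∀ ξ ∈ I, deriv φ ξ / φ ξ = k * x ξ)
    (hh : ∀ ξ ∈ I, deriv h ξ = y ξ - (((n : ℝ) - 2) * k - (m : ℝ)) * x ξ) :
    ∀ ξ ∈ I,
      (((n : ℝ) - 2) * deriv (deriv φ) ξ / φ ξ + deriv (deriv h) ξ
          - (m : ℝ) * deriv (deriv f) ξ / f ξ
          - 2 * (m : ℝ) * (deriv φ ξ / φ ξ) * (deriv f ξ / f ξ)
          + 2 * (deriv φ ξ / φ ξ) * deriv h ξ = 0) ∧
      (deriv (deriv φ) ξ / φ ξ - ((n : ℝ) - 1) * (deriv φ ξ / φ ξ) ^ 2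
          + (m : ℝ) * (deriv φ ξ / φ ξ) * (deriv f ξ / f ξ)
          - (deriv φ ξ / φ ξ) * deriv h ξ = 0) ∧
      (-(deriv (deriv f) ξ / f ξ)
          + ((n : ℝ) - 2) * (deriv φ ξ / φ ξ) * (deriv f ξ / f ξ)
          - ((m : ℝ) - 1) * (deriv f ξ / f ξ) ^ 2
          + (deriv f ξ / f ξ) * deriv h ξ = 0) := by
  subst hI
  intro ξ hξ
  have hmem : Set.Ioo a b ∈ nhds ξ := isOpen_Ioo.mem_nhds hξ
  have hφ0 : φ ξ ≠ 0 := (hφpos ξ hξ).ne'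
  have hf0 : f ξ ≠ 0 := (hfpos ξ hξ).ne'
  have hφd : DifferentiableAt ℝ φ ξ := (hφreg ξ hξ).differentiableAt (by norm_num)
  have hfd : DifferentiableAt ℝ f ξ := (hfreg ξ hξ).differentiableAt (by norm_num)
  have hφ' : ∀ t ∈ Set.Ioo a b, deriv φ t = k * x t * φ t := by
    intro t ht
    have := hφ t ht
    rw [div_eq_iff (hφpos t ht).ne'] at this
    linarith [this]
  have hf' : ∀ t ∈ Set.Ioo a b, deriv f t = x t * f t := by
    intro t ht
    have := hf t ht
    rw [div_eq_iff (hfpos t ht).ne'] at this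
    linarith [this]
  have hDφ : deriv (deriv φ) ξ = k * deriv x ξ * φ ξ + k * x ξ * deriv φ ξ := by
    have hev : deriv φ =ᶠ[nhds ξ] fun t => k * x t * φ t :=
      Filter.eventuallyEq_of_mem hmem hφ'
    rw [hev.deriv_eq]
    exact (((hxd ξ hξ).hasDerivAt.const_mul k).mul hφd.hasDerivAt).deriv
  have hDf : deriv (deriv f) ξ = deriv x ξ * f ξ + x ξ * deriv f ξ := by
    have hev : deriv f =ᶠ[nhds ξ] fun t => x t * f t :=
      Filter.eventuallyEq_of_mem hmem hf'
    rw [hev.deriv_eq]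
    exact ((hxd ξ hξ).hasDerivAt.mul hfd.hasDerivAt).deriv
  have hDh : deriv (deriv h) ξ
      = deriv y ξ - (((n : ℝ) - 2) * k - (m : ℝ)) * deriv x ξ := by
    have hev : deriv h =ᶠ[nhds ξ] fun t => y t - (((n : ℝ) - 2) * k - (m : ℝ)) * x t :=
      Filter.eventuallyEq_of_mem hmem hh
    rw [hev.deriv_eq]
    exact ((hyd ξ hξ).hasDerivAt.sub
      ((hxd ξ hξ).hasDerivAt.const_mul _)).deriv
  rw [hDφ, hDf, hDh, hφ' ξ hξ, hf' ξ hξ, hh ξ hξ, hsys1 ξ hξ, hsys2 ξ hξ]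
  refine ⟨?_, ?_, ?_⟩ <;> field_simp <;> ring
end

section
/- Let k > 0, m ≥ 1, n ≥ 3 and set D = √(m + k²(n−1)), a = k/D, c₃ > 0. Suppose z : I → ℝ is differentiable, with z + k − D > 0 and z + k + D > 0 on I, and z satisfies z' = −c₃(z + k − D)^((a+1)/2)·(z + k + D)^(−(a−1)/2). Define x(ξ) = c₃(z(ξ) + k − D)^((a−1)/2)·(z(ξ) + k + D)^(−(a+1)/2) and y(ξ) = x(ξ)z(ξ). Then (x, y) solves the system y' = [m + (n−2)k²]x² − 2kxy and x' = xy on I. -/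
/-!
Put `u = z + k - D`, `v = z + k + D`, so that `x = c₃ u^p v^q` with `p = (a - 1)/2`,
`q = -(a + 1)/2`, and the equation for `z` reads `z' = -x u v`. Logarithmic differentiation
gives `x' / x = z' (p / u + q / v) = -x (p v + q u)`, and `p v + q u = a D - (z + k) = -z`
because `a D = k`; hence `x' = x² z = x y`. Then `y' = x' z + x z' = x² (z² - u v)`, and
`u v = (z + k)² - D²` with `D² = m + (n - 1) k²` turns this into the equation for `y`.
-/

open Real

theorem HasDerivAt.rpow_mul_rpow {f g : ℝ → ℝ} {f' g' p q t : ℝ} (hf : HasDerivAt f f' t)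
    (hg : HasDerivAt g g' t) (hf0 : 0 < f t) (hg0 : 0 < g t) :
    HasDerivAt (fun s => f s ^ p * g s ^ q)
      (f t ^ p * g t ^ q * (p * f' / f t + q * g' / g t)) t := by
  refine ((hf.rpow_const (p := p) (Or.inl hf0.ne')).mul
    (hg.rpow_const (p := q) (Or.inl hg0.ne'))).congr_deriv ?_
  rw [rpow_sub_one hf0.ne', rpow_sub_one hg0.ne']
  field_simp

noncomputable def profile (c k D a w : ℝ) : ℝ :=
  c * (w + k - D) ^ ((a - 1) / 2) * (w + k + D) ^ (-((a + 1) / 2))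

section profile

variable {c k D a w : ℝ}

theorem profile_mul_mul (hu : 0 < w + k - D) (hv : 0 < w + k + D) :
    c * (w + k - D) ^ ((a + 1) / 2) * (w + k + D) ^ (-((a - 1) / 2)) =
      profile c k D a w * ((w + k - D) * (w + k + D)) := by
  have hp : (a + 1) / 2 = (a - 1) / 2 + 1 := by ring
  have hq : -((a - 1) / 2) = -((a + 1) / 2) + 1 := by ring
  rw [hp, hq, rpow_add_one hu.ne', rpow_add_one hv.ne', profile]
  ring

theorem hasDerivAt_profile (haD : a * D = k) (hu : 0 < w + k - D) (hv : 0 < w + k + D) :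
    HasDerivAt (profile c k D a)
      (-(w * profile c k D a w) / ((w + k - D) * (w + k + D))) w := by
  have hlog := ((hasDerivAt_id' w).add_const k |>.sub_const D).rpow_mul_rpow
    (p := (a - 1) / 2) (q := -((a + 1) / 2)) ((hasDerivAt_id' w).add_const k |>.add_const D) hu hv
  have hprofile : profile c k D a =
      fun s => c * ((s + k - D) ^ ((a - 1) / 2) * (s + k + D) ^ (-((a + 1) / 2))) := by
    funext s
    rw [profile, mul_assoc]
  rw [hprofile]
  refine (hlog.const_mul c).congr_deriv ?_
  field_simp
  linear_combination 2 * c * haD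

end profile

theorem stmt_6_general (k m n c₃ : ℝ) (hm : 1 ≤ m) (hn : 3 ≤ n)
    (D a : ℝ) (hD : D = Real.sqrt (m + k ^ 2 * (n - 1))) (ha : a = k / D)
    (I : Set ℝ)
    (z : ℝ → ℝ)
    (hz1 : ∀ ξ ∈ I, z ξ + k - D > 0)
    (hz2 : ∀ ξ ∈ I, z ξ + k + D > 0)
    (hz' : ∀ ξ ∈ I, HasDerivAt z
      (-c₃ * (z ξ + k - D) ^ ((a + 1) / 2) * (z ξ + k + D) ^ (-((a - 1) / 2))) ξ)
    (x y : ℝ → ℝ)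
    (hx : x = fun ξ => c₃ * (z ξ + k - D) ^ ((a - 1) / 2) * (z ξ + k + D) ^ (-((a + 1) / 2)))
    (hy : y = fun ξ => x ξ * z ξ) :
    ∀ ξ ∈ I,
      HasDerivAt y ((m + (n - 2) * k ^ 2) * x ξ ^ 2 - 2 * k * x ξ * y ξ) ξ ∧
      HasDerivAt x (x ξ * y ξ) ξ := by
  have hM : 0 < m + k ^ 2 * (n - 1) := by nlinarith [sq_nonneg k]
  have hD2 : D ^ 2 = m + k ^ 2 * (n - 1) := hD ▸ sq_sqrt hM.le
  have haD : a * D = k := by rw [ha, div_mul_cancel₀ _ (hD ▸ sqrt_pos.2 hM).ne']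
  have hxz : x = profile c₃ k D a ∘ z := hx
  have hxξ (s : ℝ) : x s = profile c₃ k D a (z s) := by rw [hxz]; rfl
  intro ξ hξ
  have hu := hz1 ξ hξ
  have hv := hz2 ξ hξ
  have hz : HasDerivAt z (-(x ξ * ((z ξ + k - D) * (z ξ + k + D)))) ξ := by
    have := hz' ξ hξ
    rwa [neg_mul, neg_mul, profile_mul_mul hu hv, ← hxξ] at this
  have hx' : HasDerivAt x (x ξ * y ξ) ξ := by
    rw [hxz]
    refine ((hasDerivAt_profile haD hu hv).comp ξ hz).congr_deriv ?_
    rw [Function.comp_apply, ← hxξ, hy]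
    field_simp
  refine ⟨?_, hx'⟩
  rw [hy]
  refine (hx'.mul hz).congr_deriv ?_
  rw [hy]
  linear_combination (x ξ ^ 2) * hD2

/-- The non-constant-z family: if z satisfies
z' = −c₃(z+k−D)^((a+1)/2)(z+k+D)^(−(a−1)/2) with D = √(m+k²(n−1)), a = k/D, and
x = c₃(z+k−D)^((a−1)/2)(z+k+D)^(−(a+1)/2), y = xz, then (x, y) solves the planar
system y' = [m + (n−2)k²]x² − 2kxy, x' = xy. -/
theorem stmt_6 (k m n c₃ : ℝ) (hk : 0 < k) (hm : 1 ≤ m) (hn : 3 ≤ n)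
    (hc₃ : 0 < c₃)
    (D a : ℝ) (hD : D = Real.sqrt (m + k ^ 2 * (n - 1))) (ha : a = k / D)
    (s t : ℝ) (I : Set ℝ) (hI : I = Set.Ioo s t)
    (z : ℝ → ℝ)
    (hz1 : ∀ ξ ∈ I, z ξ + k - D > 0)
    (hz2 : ∀ ξ ∈ I, z ξ + k + D > 0)
    (hz' : ∀ ξ ∈ I, HasDerivAt z
      (-c₃ * (z ξ + k - D) ^ ((a + 1) / 2) * (z ξ + k + D) ^ (-((a - 1) / 2))) ξ)
    (x y : ℝ → ℝ)
    (hx : x = fun ξ => c₃ * (z ξ + k - D) ^ ((a - 1) / 2) * (z ξ + k + D) ^ (-((a + 1) / 2)))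
    (hy : y = fun ξ => x ξ * z ξ) :
    ∀ ξ ∈ I,
      HasDerivAt y ((m + (n - 2) * k ^ 2) * x ξ ^ 2 - 2 * k * x ξ * y ξ) ξ ∧
      HasDerivAt x (x ξ * y ξ) ξ :=
  stmt_6_general k m n c₃ hm hn D a hD ha I z hz1 hz2 hz' x y hx hy
end

section
/- Let φ, f : I → ℝ be positive differentiable functions, n ≥ 3, m ≥ 1, c₄, c₅ ∈ ℝ. If h : I → ℝ satisfies h'(ξ) = φ(ξ)^(−2)·[∫(m(f''/f)φ² + 2mφφ'(f'/f) − (n−2)φφ'') dξ + c₄], then h satisfies the linear ODE (n−2)fφ'' + fφh'' − mφf'' − 2mφ'f' + 2fφ'h' = 0 on I. -/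
open Filter Topology

theorem sq_mul_deriv_add_of_eventuallyEq_div_sq {φ F u : ℝ → ℝ} {x g : ℝ}
    (hφ : DifferentiableAt ℝ φ x) (hφ0 : φ x ≠ 0) (hF : HasDerivAt F g x)
    (hu : u =ᶠ[𝓝 x] fun y => F y / φ y ^ 2) :
    φ x ^ 2 * deriv u x + 2 * φ x * deriv φ x * u x = g := by
  have hφ2 : HasDerivAt (fun y => φ y ^ 2) (2 * φ x * deriv φ x) x := by
    simpa [mul_comm] using hφ.hasDerivAt.fun_pow 2
  have hq : HasDerivAt (fun y => F y / φ y ^ 2)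
      ((g * φ x ^ 2 - F x * (2 * φ x * deriv φ x)) / (φ x ^ 2) ^ 2) x :=
    hF.div hφ2 (pow_ne_zero 2 hφ0)
  rw [hu.deriv_eq, hq.deriv, hu.eq_of_nhds]
  field_simp
  ring

theorem stmt_9_general (n m : ℕ) (c₄ : ℝ)
    (a b : ℝ) (I : Set ℝ) (hI : I = Set.Ioo a b)
    (φ f h G : ℝ → ℝ)
    (hφreg : ∀ ξ ∈ I, ContDiffAt ℝ 2 φ ξ)
    (hφpos : ∀ ξ ∈ I, 0 < φ ξ) (hfpos : ∀ ξ ∈ I, 0 < f ξ)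
    (hG : ∀ ξ ∈ I, HasDerivAt G
      ((m : ℝ) * (deriv (deriv f) ξ / f ξ) * φ ξ ^ 2
        + 2 * (m : ℝ) * φ ξ * deriv φ ξ * (deriv f ξ / f ξ)
        - ((n : ℝ) - 2) * φ ξ * deriv (deriv φ) ξ) ξ)
    (hh' : ∀ ξ ∈ I, deriv h ξ = (G ξ + c₄) / φ ξ ^ 2) :
    ∀ ξ ∈ I,
      ((n : ℝ) - 2) * f ξ * deriv (deriv φ) ξ + f ξ * φ ξ * deriv (deriv h) ξ
        - (m : ℝ) * φ ξ * deriv (deriv f) ξ - 2 * (m : ℝ) * deriv φ ξ * deriv f ξ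
        + 2 * f ξ * deriv φ ξ * deriv h ξ = 0 := by
  intro ξ hξ
  have hφ0 : φ ξ ≠ 0 := (hφpos ξ hξ).ne'
  have hf0 : f ξ ≠ 0 := (hfpos ξ hξ).ne'
  have hIξ : I ∈ 𝓝 ξ := (hI ▸ isOpen_Ioo : IsOpen I).mem_nhds hξ
  -- `(φ² h')' = G'`, since `φ² h' = G + c₄` on `I`
  have key := sq_mul_deriv_add_of_eventuallyEq_div_sq
    ((hφreg ξ hξ).differentiableAt two_ne_zero) hφ0 ((hG ξ hξ).add_const c₄)
    (eventually_of_mem hIξ hh')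
  field_simp at key
  linear_combination key

/-- Theorem 1.7: If h'(ξ) = φ(ξ)⁻²·(G(ξ) + c₄) where G is an
antiderivative of m(f''/f)φ² + 2mφφ'(f'/f) − (n−2)φφ'', then h satisfies the
linear ODE (n−2)fφ'' + fφh'' − mφf'' − 2mφ'f' + 2fφ'h' = 0. -/
theorem stmt_9 (n m : ℕ) (hn : 3 ≤ n) (hm : 1 ≤ m) (c₄ c₅ : ℝ)
    (a b : ℝ) (I : Set ℝ) (hI : I = Set.Ioo a b)
    (φ f h G : ℝ → ℝ)
    (hφreg : ∀ ξ ∈ I, ContDiffAt ℝ 2 φ ξ)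
    (hfreg : ∀ ξ ∈ I, ContDiffAt ℝ 2 f ξ)
    (hφpos : ∀ ξ ∈ I, 0 < φ ξ) (hfpos : ∀ ξ ∈ I, 0 < f ξ)
    (hG : ∀ ξ ∈ I, HasDerivAt G
      ((m : ℝ) * (deriv (deriv f) ξ / f ξ) * φ ξ ^ 2
        + 2 * (m : ℝ) * φ ξ * deriv φ ξ * (deriv f ξ / f ξ)
        - ((n : ℝ) - 2) * φ ξ * deriv (deriv φ) ξ) ξ)
    (hh' : ∀ ξ ∈ I, deriv h ξ = (G ξ + c₄) / φ ξ ^ 2)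
    (hhd : ∀ ξ ∈ I, DifferentiableAt ℝ h ξ) :
    ∀ ξ ∈ I,
      ((n : ℝ) - 2) * f ξ * deriv (deriv φ) ξ + f ξ * φ ξ * deriv (deriv h) ξ
        - (m : ℝ) * φ ξ * deriv (deriv f) ξ - 2 * (m : ℝ) * deriv φ ξ * deriv f ξ
        + 2 * f ξ * deriv φ ξ * deriv h ξ = 0 :=
  stmt_9_general n m c₄ a b I hI φ f h G hφreg hφpos hfpos hG hh'
end
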